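/- Let n ≥ 5 and 1 < s < n−2. There exists a constant C = C(n, s) > 0, independent of k and r, such that for all integers k ≥ 3, all reals r > 1, every constant M ≥ 0 and every measurable function f : ℝⁿ → ℝ with |f(y)| ≤ M Σ_{j=1}^k ⟨y−P^j⟩^{−s−2} for all y, the Newtonian potential satisfies, for every x ∈ ℝⁿ, ∫_{ℝⁿ} |f(y)| |x−y|^{−(n−2)} dy ≤ C M Σ_{j=1}^k ⟨x−P^j⟩^{−s}. -/

import Mathlib

open Real Finset MeasureTheory

/-- `⟨x⟩ := (1 + |x|²)^{1/2}`. -/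
noncomputable def jap {n : ℕ} (x : EuclideanSpace ℝ (Fin n)) : ℝ :=
  Real.sqrt (1 + ‖x‖ ^ 2)

/-- The points `P^j := (r cos(2π(j−1)/k), r sin(2π(j−1)/k), 0, …, 0) ∈ ℝⁿ`. -/
noncomputable def pts (n k : ℕ) (r : ℝ) (j : ℕ) : EuclideanSpace ℝ (Fin n) :=
  WithLp.toLp 2 fun (i : Fin n) => if (i : ℕ) = 0 then r * Real.cos (2 * Real.pi * ((j : ℝ) - 1) / k)
  else if (i : ℕ) = 1 then r * Real.sin (2 * Real.pi * ((j : ℝ) - 1) / k)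
  else 0

open Metric ENNReal

section japprops
variable {n : ℕ}

lemma one_le_jap (x : EuclideanSpace ℝ (Fin n)) : 1 ≤ jap x := by
  have : (1:ℝ) = Real.sqrt 1 := (Real.sqrt_one).symm
  rw [jap, this]
  exact Real.sqrt_le_sqrt (by nlinarith [sq_nonneg ‖x‖])

lemma jap_pos (x : EuclideanSpace ℝ (Fin n)) : 0 < jap x :=
  lt_of_lt_of_le one_pos (one_le_jap x)

lemma norm_le_jap (x : EuclideanSpace ℝ (Fin n)) : ‖x‖ ≤ jap x := by
  have : ‖x‖ = Real.sqrt (‖x‖ ^ 2) := by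
    rw [Real.sqrt_sq (norm_nonneg x)]
  rw [jap, this]
  exact Real.sqrt_le_sqrt (by nlinarith [Real.sq_sqrt (by positivity : (0:ℝ) ≤ ‖x‖^2)])

lemma sq_jap (x : EuclideanSpace ℝ (Fin n)) : jap x ^ 2 = 1 + ‖x‖ ^ 2 :=
  Real.sq_sqrt (by positivity)

lemma jap_le (x y : EuclideanSpace ℝ (Fin n)) : jap x ≤ jap y + ‖x - y‖ := by
  have h1 : ‖x‖ ≤ ‖y‖ + ‖x - y‖ := by
    have := norm_sub_norm_le x y
    linarith [abs_le.1 (abs_norm_sub_norm_le x y)]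
  have h2 : jap x ^ 2 ≤ (jap y + ‖x - y‖) ^ 2 := by
    rw [sq_jap]
    nlinarith [norm_le_jap y, norm_nonneg (x - y), norm_nonneg x, norm_nonneg y, sq_jap y,
      jap_pos y]
  calc jap x = Real.sqrt (jap x ^ 2) := (Real.sqrt_sq (jap_pos x).le).symm
    _ ≤ Real.sqrt ((jap y + ‖x - y‖) ^ 2) := Real.sqrt_le_sqrt h2
    _ = jap y + ‖x - y‖ := Real.sqrt_sq (add_nonneg (jap_pos y).le (norm_nonneg _))

lemma continuous_jap : Continuous (jap (n := n)) := by
  unfold jap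
  fun_prop

end japprops
section dyadic
variable {n : ℕ}

local notation "E" => EuclideanSpace ℝ (Fin n)

lemma lint_ball (hn : 0 < n) (b : ℝ) (hb0 : 0 < b) (hbn : b < n) :
    ∃ c : ℝ≥0∞, c ≠ ⊤ ∧ ∀ (x : E) (ρ : ℝ), 0 < ρ →
      ∫⁻ y in Metric.ball x ρ, ENNReal.ofReal (‖x - y‖ ^ (-b)) ≤
        c * ENNReal.ofReal (ρ ^ ((n : ℝ) - b)) := by
  haveI : Nonempty (Fin n) := ⟨⟨0, hn⟩⟩
  set V : ℝ≥0∞ := volume (Metric.ball (0 : E) 1) with hV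
  have hVtop : V ≠ ⊤ := measure_ball_lt_top.ne
  set q : ℝ≥0∞ := ENNReal.ofReal ((2:ℝ) ^ (b - (n:ℝ))) with hq
  have hqlt : q < 1 := by
    rw [hq]
    exact ENNReal.ofReal_lt_one.2 (Real.rpow_lt_one_of_one_lt_of_neg one_lt_two (by linarith))
  have hgeom : (∑' i : ℕ, q ^ i) = (1 - q)⁻¹ := ENNReal.tsum_geometric q
  have hgeom_top : (1 - q)⁻¹ ≠ ⊤ := by
    simp only [ne_eq, ENNReal.inv_eq_top, tsub_eq_zero_iff_le, not_le]
    exact hqlt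
  refine ⟨ENNReal.ofReal ((2:ℝ) ^ b) * V * (1 - q)⁻¹, by
    exact ENNReal.mul_ne_top (ENNReal.mul_ne_top ENNReal.ofReal_ne_top hVtop) hgeom_top, ?_⟩
  intro x ρ hρ
  -- radii
  set r : ℕ → ℝ := fun i => ρ * (2:ℝ)⁻¹ ^ i with hr
  have hrpos : ∀ i, 0 < r i := fun i => by positivity
  have hrsucc : ∀ i, r (i + 1) = r i / 2 := fun i => by
    simp only [hr, pow_succ]; ring
  -- covering
  have hcover : Metric.ball x ρ ⊆ {x} ∪ ⋃ i : ℕ, (Metric.ball x (r i) \ Metric.ball x (r (i+1))) := by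
    intro y hy
    rcases eq_or_ne y x with h | h
    · exact Or.inl h
    · right
      have hd : 0 < dist y x := dist_pos.2 h
      have hP : ∃ i : ℕ, r (i + 1) ≤ dist y x := by
        obtain ⟨m, hm⟩ := exists_pow_lt_of_lt_one (by positivity : (0:ℝ) < dist y x / ρ)
          (by norm_num : (2:ℝ)⁻¹ < 1)
        refine ⟨m, ?_⟩
        have : r m < dist y x := by
          rw [hr]
          calc ρ * (2:ℝ)⁻¹ ^ m < ρ * (dist y x / ρ) := by
                apply mul_lt_mul_of_pos_left hm hρ
            _ = dist y x := by field_simp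
        have := hrsucc m
        nlinarith [this, hrpos m]
      set i₀ := Nat.find hP with hi₀
      have h₁ : r (i₀ + 1) ≤ dist y x := Nat.find_spec hP
      have h₂ : dist y x < r i₀ := by
        rcases Nat.eq_zero_or_pos i₀ with h0 | h0
        · rw [h0]; simpa [hr] using hy
        · obtain ⟨j, hj⟩ := Nat.exists_eq_succ_of_ne_zero h0.ne'
          have := Nat.find_min hP (by omega : j < i₀)
          rw [hj]
          exact lt_of_not_ge (by simpa using this)
      exact Set.mem_iUnion.2 ⟨i₀, by simp [Metric.mem_ball, h₂, h₁, not_lt.2 h₁]⟩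
  -- singleton has measure zero
  have hsing : (volume : Measure E) {x} = 0 := measure_singleton x
  calc ∫⁻ y in Metric.ball x ρ, ENNReal.ofReal (‖x - y‖ ^ (-b))
      ≤ ∫⁻ y in ({x} ∪ ⋃ i : ℕ, (Metric.ball x (r i) \ Metric.ball x (r (i+1)))),
          ENNReal.ofReal (‖x - y‖ ^ (-b)) := lintegral_mono_set hcover
    _ ≤ (∫⁻ y in ({x} : Set E), ENNReal.ofReal (‖x - y‖ ^ (-b))) +
        ∫⁻ y in (⋃ i : ℕ, (Metric.ball x (r i) \ Metric.ball x (r (i+1)))),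
          ENNReal.ofReal (‖x - y‖ ^ (-b)) := lintegral_union_le _ _ _
    _ ≤ 0 + ∑' i : ℕ, ∫⁻ y in (Metric.ball x (r i) \ Metric.ball x (r (i+1))),
          ENNReal.ofReal (‖x - y‖ ^ (-b)) := by
        gcongr
        · rw [setLIntegral_measure_zero _ _ hsing]
        · exact lintegral_iUnion_le _ _
    _ = ∑' i : ℕ, ∫⁻ y in (Metric.ball x (r i) \ Metric.ball x (r (i+1))),
          ENNReal.ofReal (‖x - y‖ ^ (-b)) := by rw [zero_add]
    _ ≤ ∑' i : ℕ, ENNReal.ofReal (ρ ^ ((n:ℝ) - b)) * ENNReal.ofReal ((2:ℝ) ^ b) * V * q ^ i := by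
        apply ENNReal.tsum_le_tsum
        intro i
        have hstep1 : ∫⁻ y in (Metric.ball x (r i) \ Metric.ball x (r (i+1))),
            ENNReal.ofReal (‖x - y‖ ^ (-b)) ≤
            ENNReal.ofReal (r (i+1) ^ (-b)) * volume (Metric.ball x (r i) \ Metric.ball x (r (i+1))) := by
          rw [← setLIntegral_const]
          apply setLIntegral_mono measurable_const
          intro y hy
          apply ENNReal.ofReal_le_ofReal
          apply Real.rpow_le_rpow_of_nonpos (hrpos (i+1)) _ (by linarith)
          calc r (i+1) ≤ dist y x := not_lt.1 (fun hc => hy.2 (Metric.mem_ball.2 hc))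
            _ = ‖x - y‖ := by rw [dist_eq_norm, norm_sub_rev]
        have hstep2 : volume (Metric.ball x (r i) \ Metric.ball x (r (i+1))) ≤
            ENNReal.ofReal (r i ^ n) * V := by
          calc volume (Metric.ball x (r i) \ Metric.ball x (r (i+1)))
              ≤ volume (Metric.ball x (r i)) := measure_mono Set.diff_subset
            _ = ENNReal.ofReal (r i ^ Module.finrank ℝ E) * V := Measure.addHaar_ball _ _ (hrpos i).le
            _ = ENNReal.ofReal (r i ^ n) * V := by rw [finrank_euclideanSpace_fin]
        calc ∫⁻ y in (Metric.ball x (r i) \ Metric.ball x (r (i+1))),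
            ENNReal.ofReal (‖x - y‖ ^ (-b))
            ≤ ENNReal.ofReal (r (i+1) ^ (-b)) * (ENNReal.ofReal (r i ^ n) * V) := by
              exact le_trans hstep1 (mul_le_mul_right hstep2 _)
          _ = ENNReal.ofReal (r (i+1) ^ (-b) * r i ^ n) * V := by
              rw [ENNReal.ofReal_mul (Real.rpow_nonneg (hrpos (i+1)).le _), mul_assoc]
          _ = ENNReal.ofReal (ρ ^ ((n:ℝ) - b)) * ENNReal.ofReal ((2:ℝ) ^ b) * V * q ^ i := by
              have hcalc : r (i+1) ^ (-b) * r i ^ n =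
                  ρ ^ ((n:ℝ) - b) * (2:ℝ) ^ b * ((2:ℝ) ^ (b - (n:ℝ))) ^ i := by
                simp only [hr]
                have h2 : (0:ℝ) < 2 := two_pos
                have hhalf : ∀ m : ℕ, ((2:ℝ)⁻¹) ^ m = (2:ℝ) ^ (-(m:ℝ)) := by
                  intro m
                  rw [Real.rpow_neg h2.le, Real.rpow_natCast, inv_pow]
                calc (ρ * (2:ℝ)⁻¹ ^ (i+1)) ^ (-b) * (ρ * (2:ℝ)⁻¹ ^ i) ^ (n:ℕ)
                    = (ρ * 2 ^ (-((i+1:ℕ):ℝ))) ^ (-b) * (ρ * 2 ^ (-(i:ℝ))) ^ ((n:ℕ):ℝ) := by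
                      rw [hhalf, hhalf, Real.rpow_natCast]
                  _ = (ρ ^ (-b) * (2 ^ (-((i+1:ℕ):ℝ))) ^ (-b)) *
                      (ρ ^ ((n:ℕ):ℝ) * (2 ^ (-(i:ℝ))) ^ ((n:ℕ):ℝ)) := by
                      rw [Real.mul_rpow hρ.le (Real.rpow_nonneg h2.le _),
                          Real.mul_rpow hρ.le (Real.rpow_nonneg h2.le _)]
                  _ = (ρ ^ (-b) * ρ ^ ((n:ℕ):ℝ)) *
                      ((2:ℝ) ^ (-((i+1:ℕ):ℝ) * (-b)) * (2:ℝ) ^ (-(i:ℝ) * ((n:ℕ):ℝ))) := by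
                      rw [← Real.rpow_mul h2.le, ← Real.rpow_mul h2.le]; ring
                  _ = ρ ^ ((n:ℝ) - b) * (2:ℝ) ^ (b + (b - (n:ℝ)) * (i:ℝ)) := by
                      rw [← Real.rpow_add hρ, ← Real.rpow_add h2]
                      congr 1
                      · congr 1; push_cast; ring
                      · congr 1; push_cast; ring
                  _ = ρ ^ ((n:ℝ) - b) * (2:ℝ) ^ b * ((2:ℝ) ^ (b - (n:ℝ))) ^ i := by
                      rw [← Real.rpow_natCast ((2:ℝ) ^ (b - (n:ℝ))) i, ← Real.rpow_mul h2.le,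
                        Real.rpow_add h2]
                      ring
              rw [hcalc]
              rw [ENNReal.ofReal_mul (by positivity), ENNReal.ofReal_mul (by positivity),
                ENNReal.ofReal_pow (by positivity), hq]
              ring
    _ = ENNReal.ofReal ((2:ℝ) ^ b) * V * (1 - q)⁻¹ * ENNReal.ofReal (ρ ^ ((n:ℝ) - b)) := by
        rw [ENNReal.tsum_mul_left, hgeom]
        ring
end dyadic
section dyadic2
variable {n : ℕ}
local notation "E" => EuclideanSpace ℝ (Fin n)

lemma lint_tail (hn : 0 < n) (p : ℝ) (hp : (n : ℝ) < p) :
    ∃ c : ℝ≥0∞, c ≠ ⊤ ∧ ∀ T : ℝ, 0 < T →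
      ∫⁻ y in {y : E | T ≤ ‖y‖}, ENNReal.ofReal (‖y‖ ^ (-p)) ≤
        c * ENNReal.ofReal (T ^ ((n : ℝ) - p)) := by
  haveI : Nonempty (Fin n) := ⟨⟨0, hn⟩⟩
  set V : ℝ≥0∞ := volume (Metric.ball (0 : E) 1) with hV
  have hVtop : V ≠ ⊤ := measure_ball_lt_top.ne
  set q : ℝ≥0∞ := ENNReal.ofReal ((2:ℝ) ^ ((n:ℝ) - p)) with hq
  have hqlt : q < 1 := by
    rw [hq]
    exact ENNReal.ofReal_lt_one.2 (Real.rpow_lt_one_of_one_lt_of_neg one_lt_two (by linarith))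
  have hgeom : (∑' i : ℕ, q ^ i) = (1 - q)⁻¹ := ENNReal.tsum_geometric q
  have hgeom_top : (1 - q)⁻¹ ≠ ⊤ := by
    simp only [ne_eq, ENNReal.inv_eq_top, tsub_eq_zero_iff_le, not_le]
    exact hqlt
  refine ⟨ENNReal.ofReal ((2:ℝ) ^ (n:ℕ)) * V * (1 - q)⁻¹, by
    exact ENNReal.mul_ne_top (ENNReal.mul_ne_top ENNReal.ofReal_ne_top hVtop) hgeom_top, ?_⟩
  intro T hT
  set r : ℕ → ℝ := fun i => T * (2:ℝ) ^ i with hr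
  have hrpos : ∀ i, 0 < r i := fun i => by positivity
  have hrmono : ∀ i, r i ≤ r (i+1) := fun i => by
    simp only [hr, pow_succ]
    nlinarith [hrpos i, pow_pos (by norm_num : (0:ℝ) < 2) i]
  have hcover : {y : E | T ≤ ‖y‖} ⊆
      ⋃ i : ℕ, ({y : E | r i ≤ ‖y‖} ∩ Metric.ball 0 (r (i+1))) := by
    intro y hy
    have hy' : T ≤ ‖y‖ := hy
    have hP : ∃ i : ℕ, ‖y‖ < r (i + 1) := by
      obtain ⟨m, hm⟩ := pow_unbounded_of_one_lt (‖y‖ / T) (by norm_num : (1:ℝ) < 2)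
      refine ⟨m, ?_⟩
      have : ‖y‖ < T * 2 ^ m := by
        rw [div_lt_iff₀ hT] at hm; linarith [hm]
      calc ‖y‖ < T * 2 ^ m := this
        _ ≤ T * 2 ^ (m+1) := by
          exact mul_le_mul_of_nonneg_left
            (pow_le_pow_right₀ (by norm_num) (Nat.le_succ m)) hT.le
    set i₀ := Nat.find hP with hi₀
    have h₁ : ‖y‖ < r (i₀ + 1) := Nat.find_spec hP
    have h₂ : r i₀ ≤ ‖y‖ := by
      rcases Nat.eq_zero_or_pos i₀ with h0 | h0
      · rw [h0]; simpa [hr] using hy'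
      · obtain ⟨j, hj⟩ := Nat.exists_eq_succ_of_ne_zero h0.ne'
        have := Nat.find_min hP (by omega : j < i₀)
        rw [hj]
        exact not_lt.1 (by simpa using this)
    exact Set.mem_iUnion.2 ⟨i₀, ⟨h₂, by simpa [Metric.mem_ball, dist_eq_norm] using h₁⟩⟩
  calc ∫⁻ y in {y : E | T ≤ ‖y‖}, ENNReal.ofReal (‖y‖ ^ (-p))
      ≤ ∫⁻ y in (⋃ i : ℕ, ({y : E | r i ≤ ‖y‖} ∩ Metric.ball 0 (r (i+1)))),
          ENNReal.ofReal (‖y‖ ^ (-p)) := lintegral_mono_set hcover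
    _ ≤ ∑' i : ℕ, ∫⁻ y in ({y : E | r i ≤ ‖y‖} ∩ Metric.ball 0 (r (i+1))),
          ENNReal.ofReal (‖y‖ ^ (-p)) := lintegral_iUnion_le _ _
    _ ≤ ∑' i : ℕ, ENNReal.ofReal (T ^ ((n:ℝ) - p)) * ENNReal.ofReal ((2:ℝ) ^ (n:ℕ)) * V * q ^ i := by
        apply ENNReal.tsum_le_tsum
        intro i
        have hstep1 : ∫⁻ y in ({y : E | r i ≤ ‖y‖} ∩ Metric.ball 0 (r (i+1))),
            ENNReal.ofReal (‖y‖ ^ (-p)) ≤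
            ENNReal.ofReal (r i ^ (-p)) * volume ({y : E | r i ≤ ‖y‖} ∩ Metric.ball 0 (r (i+1))) := by
          rw [← setLIntegral_const]
          apply setLIntegral_mono measurable_const
          intro y hy
          exact ENNReal.ofReal_le_ofReal
            (Real.rpow_le_rpow_of_nonpos (hrpos i) hy.1 (by linarith))
        have hstep2 : volume ({y : E | r i ≤ ‖y‖} ∩ Metric.ball 0 (r (i+1))) ≤
            ENNReal.ofReal (r (i+1) ^ n) * V := by
          calc volume ({y : E | r i ≤ ‖y‖} ∩ Metric.ball 0 (r (i+1)))
              ≤ volume (Metric.ball (0:E) (r (i+1))) := measure_mono Set.inter_subset_right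
            _ = ENNReal.ofReal (r (i+1) ^ Module.finrank ℝ E) * V :=
                Measure.addHaar_ball _ _ (hrpos (i+1)).le
            _ = ENNReal.ofReal (r (i+1) ^ n) * V := by rw [finrank_euclideanSpace_fin]
        calc ∫⁻ y in ({y : E | r i ≤ ‖y‖} ∩ Metric.ball 0 (r (i+1))),
            ENNReal.ofReal (‖y‖ ^ (-p))
            ≤ ENNReal.ofReal (r i ^ (-p)) * (ENNReal.ofReal (r (i+1) ^ n) * V) :=
              le_trans hstep1 (mul_le_mul_right hstep2 _)
          _ = ENNReal.ofReal (r i ^ (-p) * r (i+1) ^ n) * V := by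
              rw [ENNReal.ofReal_mul (Real.rpow_nonneg (hrpos i).le _), mul_assoc]
          _ = ENNReal.ofReal (T ^ ((n:ℝ) - p)) * ENNReal.ofReal ((2:ℝ) ^ (n:ℕ)) * V * q ^ i := by
              have hcalc : r i ^ (-p) * r (i+1) ^ n =
                  T ^ ((n:ℝ) - p) * (2:ℝ) ^ (n:ℕ) * ((2:ℝ) ^ ((n:ℝ) - p)) ^ i := by
                simp only [hr]
                have h2 : (0:ℝ) < 2 := two_pos
                calc (T * (2:ℝ) ^ i) ^ (-p) * (T * (2:ℝ) ^ (i+1)) ^ (n:ℕ)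
                    = (T * 2 ^ ((i:ℕ):ℝ)) ^ (-p) * (T * 2 ^ ((i+1:ℕ):ℝ)) ^ ((n:ℕ):ℝ) := by
                      rw [Real.rpow_natCast, Real.rpow_natCast, Real.rpow_natCast]
                  _ = (T ^ (-p) * (2 ^ ((i:ℕ):ℝ)) ^ (-p)) *
                      (T ^ ((n:ℕ):ℝ) * (2 ^ ((i+1:ℕ):ℝ)) ^ ((n:ℕ):ℝ)) := by
                      rw [Real.mul_rpow hT.le (Real.rpow_nonneg h2.le _),
                          Real.mul_rpow hT.le (Real.rpow_nonneg h2.le _)]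
                  _ = (T ^ (-p) * T ^ ((n:ℕ):ℝ)) *
                      ((2:ℝ) ^ (((i:ℕ):ℝ) * (-p)) * (2:ℝ) ^ (((i+1:ℕ):ℝ) * ((n:ℕ):ℝ))) := by
                      rw [← Real.rpow_mul h2.le, ← Real.rpow_mul h2.le]; ring
                  _ = T ^ ((n:ℝ) - p) * (2:ℝ) ^ ((n:ℝ) + ((n:ℝ) - p) * (i:ℝ)) := by
                      rw [← Real.rpow_add hT, ← Real.rpow_add h2]
                      congr 1
                      · congr 1; push_cast; ring
                      · congr 1; push_cast; ring
                  _ = T ^ ((n:ℝ) - p) * (2:ℝ) ^ (n:ℕ) * ((2:ℝ) ^ ((n:ℝ) - p)) ^ i := by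
                      rw [← Real.rpow_natCast ((2:ℝ) ^ ((n:ℝ) - p)) i, ← Real.rpow_mul h2.le,
                        Real.rpow_add h2, ← Real.rpow_natCast (2:ℝ) n]
                      ring
              rw [hcalc]
              rw [ENNReal.ofReal_mul (by positivity), ENNReal.ofReal_mul (by positivity),
                ENNReal.ofReal_pow (by positivity), ENNReal.ofReal_pow (by positivity), hq]
              ring
    _ = ENNReal.ofReal ((2:ℝ) ^ (n:ℕ)) * V * (1 - q)⁻¹ * ENNReal.ofReal (T ^ ((n:ℝ) - p)) := by
        rw [ENNReal.tsum_mul_left, hgeom]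
        ring
end dyadic2
section key
variable {n : ℕ}

lemma measurable_kernelR (x : EuclideanSpace ℝ (Fin n)) (κ : ℝ) (hκ0 : 0 ≤ κ) :
    Measurable fun y : EuclideanSpace ℝ (Fin n) => ‖x - y‖ ^ (-κ) := by
  simp only [show ∀ y : EuclideanSpace ℝ (Fin n), ‖x - y‖ ^ (-κ) = (‖x - y‖ ^ κ)⁻¹ from
    fun y => Real.rpow_neg (norm_nonneg _) _]
  exact (((continuous_const.sub continuous_id).norm.rpow_const
    (fun y => Or.inr hκ0)).measurable).inv

lemma measurable_kernel (x : EuclideanSpace ℝ (Fin n)) (κ : ℝ) (hκ0 : 0 ≤ κ) :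
    Measurable fun y : EuclideanSpace ℝ (Fin n) => ENNReal.ofReal (‖x - y‖ ^ (-κ)) :=
  (measurable_kernelR x κ hκ0).ennreal_ofReal

lemma measurable_japp (t : ℝ) :
    Measurable fun y : EuclideanSpace ℝ (Fin n) => ENNReal.ofReal (jap y ^ t) :=
  ((continuous_jap.rpow_const (fun y => Or.inl (jap_pos y).ne')).measurable).ennreal_ofReal

lemma log_four : Real.log 4 = 2 * Real.log 2 := by
  rw [show (4:ℝ) = 2 ^ (2:ℕ) by norm_num, Real.log_pow]
  push_cast; ring

lemma keyL (hn : 5 ≤ n) (s : ℝ) (hs0 : 0 < s) (hs1 : s < (n : ℝ) - 2) :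
    ∃ c : ℝ≥0∞, c ≠ ⊤ ∧ ∀ x : EuclideanSpace ℝ (Fin n),
      ∫⁻ y, ENNReal.ofReal (jap y ^ (-s - 2)) * ENNReal.ofReal (‖x - y‖ ^ (-((n:ℝ) - 2))) ≤
        c * ENNReal.ofReal (jap x ^ (-s)) := by
  have hn0 : 0 < n := by omega
  have hn5 : (5:ℝ) ≤ (n:ℝ) := by exact_mod_cast hn
  set κ : ℝ := (n:ℝ) - 2 with hκ
  have hκ0 : 0 < κ := by rw [hκ]; linarith
  have hκn : κ < n := by rw [hκ]; linarith
  have ha0 : 0 < s + 2 := by linarith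
  have han : s + 2 < n := by linarith
  have hpn : (n:ℝ) < (s + 2) + κ := by rw [hκ]; linarith
  obtain ⟨c1, hc1, H1⟩ := lint_ball hn0 κ hκ0 hκn
  obtain ⟨c2, hc2, H2⟩ := lint_ball hn0 (s+2) ha0 han
  obtain ⟨c3, hc3, H3⟩ := lint_tail hn0 ((s+2)+κ) hpn
  refine ⟨c1 * ENNReal.ofReal ((2:ℝ) ^ s)
      + c2 * ENNReal.ofReal ((2:ℝ) ^ κ * (4:ℝ) ^ ((n:ℝ) - (s+2)))
      + ENNReal.ofReal ((4:ℝ) ^ κ) * c3 * ENNReal.ofReal ((2:ℝ) ^ (-s)), ?_, ?_⟩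
  · exact ENNReal.add_ne_top.2 ⟨ENNReal.add_ne_top.2
      ⟨ENNReal.mul_ne_top hc1 ENNReal.ofReal_ne_top,
       ENNReal.mul_ne_top hc2 ENNReal.ofReal_ne_top⟩,
      ENNReal.mul_ne_top (ENNReal.mul_ne_top ENNReal.ofReal_ne_top hc3) ENNReal.ofReal_ne_top⟩
  haveI : Nonempty (Fin n) := ⟨⟨0, hn0⟩⟩
  intro x
  set F : EuclideanSpace ℝ (Fin n) → ℝ≥0∞ :=
    fun y => ENNReal.ofReal (jap y ^ (-s - 2)) * ENNReal.ofReal (‖x - y‖ ^ (-κ)) with hF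
  set R := jap x with hRdef
  have hR1 : 1 ≤ R := one_le_jap x
  have hR0 : 0 < R := by linarith
  set A := Metric.ball x (R/2) with hA
  set B1 := Aᶜ ∩ {y : EuclideanSpace ℝ (Fin n) | jap y < 4*R} with hB1
  set B2 := Aᶜ ∩ {y : EuclideanSpace ℝ (Fin n) | jap y < 4*R}ᶜ with hB2
  -- region A
  have bndA : ∫⁻ y in A, F y ≤ c1 * ENNReal.ofReal ((2:ℝ)^s) * ENNReal.ofReal (R ^ (-s)) := by
    have hbound : ∀ y ∈ A, F y ≤
        ENNReal.ofReal ((R/2) ^ (-s-2)) * ENNReal.ofReal (‖x - y‖ ^ (-κ)) := by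
      intro y hy
      apply mul_le_mul_left
      apply ENNReal.ofReal_le_ofReal
      apply Real.rpow_le_rpow_of_nonpos (by positivity) ?_ (by linarith)
      have h1 : ‖x - y‖ < R/2 := by
        rw [← dist_eq_norm, dist_comm]; exact Metric.mem_ball.1 hy
      have h2 := jap_le x y
      linarith
    calc ∫⁻ y in A, F y
        ≤ ∫⁻ y in A, ENNReal.ofReal ((R/2)^(-s-2)) * ENNReal.ofReal (‖x-y‖^(-κ)) :=
          setLIntegral_mono (measurable_const.mul (measurable_kernel x κ hκ0.le)) hbound
      _ = ENNReal.ofReal ((R/2)^(-s-2)) * ∫⁻ y in A, ENNReal.ofReal (‖x-y‖^(-κ)) :=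
          lintegral_const_mul' _ _ ENNReal.ofReal_ne_top
      _ ≤ ENNReal.ofReal ((R/2)^(-s-2)) * (c1 * ENNReal.ofReal ((R/2)^((n:ℝ)-κ))) :=
          mul_le_mul_right (H1 x (R/2) (by positivity)) _
      _ = c1 * ENNReal.ofReal ((R/2)^(-s-2) * (R/2)^((n:ℝ)-κ)) := by
          rw [mul_left_comm, ← ENNReal.ofReal_mul (by positivity)]
      _ = c1 * ENNReal.ofReal ((2:ℝ)^s * R^(-s)) := by
          congr 2
          have hhalf : (0:ℝ) < R/2 := by positivity
          rw [← Real.rpow_add hhalf, show (-s-2) + ((n:ℝ)-κ) = -s by rw [hκ]; ring,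
            Real.div_rpow hR0.le (by norm_num), Real.rpow_neg (by norm_num : (0:ℝ) ≤ 2),
            div_eq_mul_inv, inv_inv]
          ring
      _ = c1 * ENNReal.ofReal ((2:ℝ)^s) * ENNReal.ofReal (R^(-s)) := by
          rw [ENNReal.ofReal_mul (by positivity)]; ring
  -- region B1
  have bndB1 : ∫⁻ y in B1, F y ≤
      c2 * ENNReal.ofReal ((2:ℝ)^κ * (4:ℝ)^((n:ℝ)-(s+2))) * ENNReal.ofReal (R ^ (-s)) := by
    have hbound : ∀ y ∈ B1, F y ≤
        ENNReal.ofReal ((R/2) ^ (-κ)) * ENNReal.ofReal (jap y ^ (-s-2)) := by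
      intro y hy
      simp only [hF]
      rw [mul_comm (ENNReal.ofReal ((R/2) ^ (-κ)))]
      apply mul_le_mul_right
      apply ENNReal.ofReal_le_ofReal
      apply Real.rpow_le_rpow_of_nonpos (by positivity) ?_ (by linarith)
      have h1 : ¬ (dist y x < R/2) := fun hc => hy.1 (Metric.mem_ball.2 hc)
      rw [← dist_eq_norm, dist_comm]
      linarith [not_lt.1 h1]
    calc ∫⁻ y in B1, F y
        ≤ ∫⁻ y in B1, ENNReal.ofReal ((R/2)^(-κ)) * ENNReal.ofReal (jap y ^ (-s-2)) :=
          setLIntegral_mono (measurable_const.mul (measurable_japp _)) hbound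
      _ = ENNReal.ofReal ((R/2)^(-κ)) * ∫⁻ y in B1, ENNReal.ofReal (jap y ^ (-s-2)) :=
          lintegral_const_mul' _ _ ENNReal.ofReal_ne_top
      _ ≤ ENNReal.ofReal ((R/2)^(-κ)) *
            ∫⁻ y in Metric.ball (0 : EuclideanSpace ℝ (Fin n)) (4*R),
              ENNReal.ofReal (jap y ^ (-s-2)) := by
          apply mul_le_mul_right
          apply lintegral_mono_set
          intro y hy
          rw [Metric.mem_ball, dist_zero_right]
          exact lt_of_le_of_lt (norm_le_jap y) hy.2
      _ ≤ ENNReal.ofReal ((R/2)^(-κ)) *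
            ∫⁻ y in Metric.ball (0 : EuclideanSpace ℝ (Fin n)) (4*R),
              ENNReal.ofReal (‖(0 : EuclideanSpace ℝ (Fin n)) - y‖ ^ (-(s+2))) := by
          apply mul_le_mul_right
          apply setLIntegral_mono_ae (measurable_kernel _ _ (by linarith)).aemeasurable
          have h0 : ∀ᵐ (y : EuclideanSpace ℝ (Fin n)), y ≠ 0 := by
            rw [ae_iff]
            simpa using measure_singleton (0 : EuclideanSpace ℝ (Fin n))
          filter_upwards [h0] with y hy0 _
          rw [zero_sub, norm_neg]
          apply ENNReal.ofReal_le_ofReal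
          have hynorm : 0 < ‖y‖ := norm_pos_iff.2 hy0
          calc jap y ^ (-s-2) ≤ ‖y‖ ^ (-s-2) :=
                Real.rpow_le_rpow_of_nonpos hynorm (norm_le_jap y) (by linarith)
            _ = ‖y‖ ^ (-(s+2)) := by rw [show -s-2 = -(s+2) by ring]
      _ ≤ ENNReal.ofReal ((R/2)^(-κ)) * (c2 * ENNReal.ofReal ((4*R)^((n:ℝ)-(s+2)))) :=
          mul_le_mul_right (H2 0 (4*R) (by positivity)) _
      _ = c2 * ENNReal.ofReal ((R/2)^(-κ) * (4*R)^((n:ℝ)-(s+2))) := by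
          rw [mul_left_comm, ← ENNReal.ofReal_mul (by positivity)]
      _ = c2 * ENNReal.ofReal ((2:ℝ)^κ * (4:ℝ)^((n:ℝ)-(s+2)) * R^(-s)) := by
          congr 2
          rw [Real.rpow_def_of_pos (by positivity : (0:ℝ) < R/2),
            Real.rpow_def_of_pos (by positivity : (0:ℝ) < 4*R),
            Real.rpow_def_of_pos (by norm_num : (0:ℝ) < 2),
            Real.rpow_def_of_pos (by norm_num : (0:ℝ) < 4),
            Real.rpow_def_of_pos hR0, ← Real.exp_add, ← Real.exp_add, ← Real.exp_add,
            Real.exp_eq_exp, Real.log_div hR0.ne' (by norm_num),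
            Real.log_mul (by norm_num) hR0.ne', log_four, hκ]
          ring
      _ = c2 * ENNReal.ofReal ((2:ℝ)^κ * (4:ℝ)^((n:ℝ)-(s+2))) * ENNReal.ofReal (R^(-s)) := by
          rw [ENNReal.ofReal_mul (by positivity)]; ring
  -- region B2
  have bndB2 : ∫⁻ y in B2, F y ≤
      ENNReal.ofReal ((4:ℝ)^κ) * c3 * ENNReal.ofReal ((2:ℝ)^(-s)) * ENNReal.ofReal (R ^ (-s)) := by
    have hfacts : ∀ y ∈ B2, (4*R ≤ jap y ∧ jap y / 2 ≤ ‖y‖ ∧ jap y / 4 ≤ ‖x - y‖) := by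
      intro y hy
      have h4R : 4*R ≤ jap y := not_lt.1 hy.2
      have hj4 : (4:ℝ) ≤ jap y := by linarith
      have hsq := sq_jap y
      have hnorm2 : jap y / 2 ≤ ‖y‖ := by
        nlinarith [norm_nonneg y, jap_pos y]
      have hxn : ‖x‖ ≤ R := by rw [hRdef]; exact norm_le_jap x
      have hsub : ‖y‖ - ‖x‖ ≤ ‖x - y‖ := by
        rw [norm_sub_rev]
        linarith [abs_le.1 (abs_norm_sub_norm_le y x)]
      refine ⟨h4R, hnorm2, by linarith⟩
    have hbound : ∀ y ∈ B2, F y ≤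
        ENNReal.ofReal ((4:ℝ)^κ) * ENNReal.ofReal (‖y‖ ^ (-((s+2)+κ))) := by
      intro y hy
      obtain ⟨h4R, hn2, hx4⟩ := hfacts y hy
      have hj0 : (0:ℝ) < jap y := jap_pos y
      have hy0 : (0:ℝ) < ‖y‖ := by linarith
      have e1 : ENNReal.ofReal (jap y ^ (-s-2)) ≤ ENNReal.ofReal (‖y‖ ^ (-s-2)) :=
        ENNReal.ofReal_le_ofReal
          (Real.rpow_le_rpow_of_nonpos hy0 (norm_le_jap y) (by linarith))
      have e2 : ENNReal.ofReal (‖x - y‖ ^ (-κ)) ≤ ENNReal.ofReal ((jap y / 4) ^ (-κ)) :=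
        ENNReal.ofReal_le_ofReal
          (Real.rpow_le_rpow_of_nonpos (by positivity) hx4 (by linarith))
      calc F y ≤ ENNReal.ofReal (‖y‖ ^ (-s-2)) * ENNReal.ofReal ((jap y / 4) ^ (-κ)) :=
            mul_le_mul' e1 e2
        _ ≤ ENNReal.ofReal (‖y‖ ^ (-s-2)) * ENNReal.ofReal ((‖y‖ / 4) ^ (-κ)) := by
            apply mul_le_mul_right
            apply ENNReal.ofReal_le_ofReal
            apply Real.rpow_le_rpow_of_nonpos (by positivity) (by linarith [norm_le_jap y])
              (by linarith)
        _ = ENNReal.ofReal ((4:ℝ)^κ) * ENNReal.ofReal (‖y‖ ^ (-((s+2)+κ))) := by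
            rw [← ENNReal.ofReal_mul (by positivity), ← ENNReal.ofReal_mul (by positivity)]
            congr 1
            rw [Real.div_rpow hy0.le (by norm_num), Real.rpow_neg (by norm_num : (0:ℝ) ≤ 4),
              div_eq_mul_inv, inv_inv, ← mul_assoc, ← Real.rpow_add hy0,
              show (-s-2) + -κ = -((s+2)+κ) by ring]
            ring
    calc ∫⁻ y in B2, F y
        ≤ ∫⁻ y in B2, ENNReal.ofReal ((4:ℝ)^κ) * ENNReal.ofReal (‖y‖ ^ (-((s+2)+κ))) := by
          apply setLIntegral_mono ?_ hbound
          have := measurable_kernel (0 : EuclideanSpace ℝ (Fin n)) ((s+2)+κ) (by positivity)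
          simp only [zero_sub, norm_neg] at this
          exact measurable_const.mul this
      _ = ENNReal.ofReal ((4:ℝ)^κ) * ∫⁻ y in B2, ENNReal.ofReal (‖y‖ ^ (-((s+2)+κ))) :=
          lintegral_const_mul' _ _ ENNReal.ofReal_ne_top
      _ ≤ ENNReal.ofReal ((4:ℝ)^κ) *
            ∫⁻ y in {y : EuclideanSpace ℝ (Fin n) | 2*R ≤ ‖y‖},
              ENNReal.ofReal (‖y‖ ^ (-((s+2)+κ))) := by
          apply mul_le_mul_right
          apply lintegral_mono_set
          intro y hy
          obtain ⟨h4R, hn2, _⟩ := hfacts y hy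
          simp only [Set.mem_setOf_eq]
          linarith
      _ ≤ ENNReal.ofReal ((4:ℝ)^κ) * (c3 * ENNReal.ofReal ((2*R) ^ ((n:ℝ) - ((s+2)+κ)))) :=
          mul_le_mul_right (H3 (2*R) (by positivity)) _
      _ = ENNReal.ofReal ((4:ℝ)^κ) * c3 * ENNReal.ofReal ((2:ℝ)^(-s)) * ENNReal.ofReal (R ^ (-s)) := by
          rw [show (n:ℝ) - ((s+2)+κ) = -s by rw [hκ]; ring,
            Real.mul_rpow (by norm_num) hR0.le, ENNReal.ofReal_mul (by positivity)]
          ring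
  -- combine
  calc ∫⁻ y, F y = (∫⁻ y in A, F y) + ∫⁻ y in Aᶜ, F y :=
        (lintegral_add_compl F measurableSet_ball).symm
    _ ≤ (∫⁻ y in A, F y) + ((∫⁻ y in B1, F y) + ∫⁻ y in B2, F y) := by
        apply add_le_add_right
        have hsub : Aᶜ ⊆ B1 ∪ B2 := by
          intro y hy
          by_cases h : jap y < 4*R
          · exact Or.inl ⟨hy, h⟩
          · exact Or.inr ⟨hy, h⟩
        exact le_trans (lintegral_mono_set hsub) (lintegral_union_le _ _ _)
    _ ≤ c1 * ENNReal.ofReal ((2:ℝ)^s) * ENNReal.ofReal (R ^ (-s))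
        + (c2 * ENNReal.ofReal ((2:ℝ)^κ * (4:ℝ)^((n:ℝ)-(s+2))) * ENNReal.ofReal (R ^ (-s))
          + ENNReal.ofReal ((4:ℝ)^κ) * c3 * ENNReal.ofReal ((2:ℝ)^(-s)) * ENNReal.ofReal (R ^ (-s))) :=
        add_le_add bndA (add_le_add bndB1 bndB2)
    _ = (c1 * ENNReal.ofReal ((2:ℝ) ^ s)
        + c2 * ENNReal.ofReal ((2:ℝ) ^ κ * (4:ℝ) ^ ((n:ℝ) - (s+2)))
        + ENNReal.ofReal ((4:ℝ) ^ κ) * c3 * ENNReal.ofReal ((2:ℝ) ^ (-s)))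
          * ENNReal.ofReal (R ^ (-s)) := by ring
end key

/-- Let `n ≥ 5` and `1 < s < n−2`. There exists `C = C(n, s) > 0`, independent of `k` and
`r`, such that for all integers `k ≥ 3`, all reals `r > 1`, every `M ≥ 0` and every
measurable `f : ℝⁿ → ℝ` with `|f(y)| ≤ M Σ_j ⟨y−P^j⟩^{−s−2}` for all `y`, the Newtonian
potential satisfies `∫ |f(y)| |x−y|^{−(n−2)} dy ≤ C M Σ_j ⟨x−P^j⟩^{−s}` for every `x`. -/
theorem stmt15 (n : ℕ) (hn : 5 ≤ n) (s : ℝ) (hs0 : 1 < s) (hs1 : s < (n : ℝ) - 2) :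
    ∃ C : ℝ, 0 < C ∧ ∀ k : ℕ, 3 ≤ k → ∀ r : ℝ, 1 < r →
      ∀ (M : ℝ), 0 ≤ M → ∀ f : EuclideanSpace ℝ (Fin n) → ℝ, Measurable f →
        (∀ y, |f y| ≤ M * ∑ j ∈ Finset.Icc 1 k, jap (y - pts n k r j) ^ (-s - 2)) →
        ∀ x : EuclideanSpace ℝ (Fin n),
          ∫ y : EuclideanSpace ℝ (Fin n), |f y| * ‖x - y‖ ^ (-((n : ℝ) - 2)) ≤
            C * M * ∑ j ∈ Finset.Icc 1 k, jap (x - pts n k r j) ^ (-s) := by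
  obtain ⟨c, hc, hkey⟩ := keyL hn s (by linarith) hs1
  refine ⟨c.toReal + 1, by positivity, ?_⟩
  intro k hk r hr M hM f hf hfb x
  have hn5 : (5:ℝ) ≤ (n:ℝ) := by exact_mod_cast hn
  have hκ0 : (0:ℝ) ≤ (n:ℝ) - 2 := by linarith
  set P : ℕ → EuclideanSpace ℝ (Fin n) := pts n k r with hP
  have hterm : ∀ (z : EuclideanSpace ℝ (Fin n)) (t : ℝ), 0 ≤ jap z ^ t :=
    fun z t => Real.rpow_nonneg (jap_pos z).le t
  have hS : 0 ≤ ∑ j ∈ Finset.Icc 1 k, jap (x - P j) ^ (-s) :=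
    Finset.sum_nonneg fun j _ => hterm _ _
  have hmeas : Measurable fun y : EuclideanSpace ℝ (Fin n) =>
      |f y| * ‖x - y‖ ^ (-((n:ℝ)-2)) :=
    (hf.abs).mul (measurable_kernelR x ((n:ℝ)-2) hκ0)
  have hjapm : ∀ j, Measurable fun y : EuclideanSpace ℝ (Fin n) =>
      ENNReal.ofReal (jap (y - P j) ^ (-s-2)) := fun j =>
    (((continuous_jap.comp (continuous_id.sub continuous_const)).rpow_const
      (fun y => Or.inl (jap_pos _).ne')).measurable).ennreal_ofReal
  rw [integral_eq_lintegral_of_nonneg_ae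
    (Filter.Eventually.of_forall fun y =>
      mul_nonneg (abs_nonneg _) (Real.rpow_nonneg (norm_nonneg _) _))
    hmeas.aestronglyMeasurable]
  apply ENNReal.toReal_le_of_le_ofReal
    (mul_nonneg (mul_nonneg (by positivity) hM) hS)
  have hptwise : ∀ y, ENNReal.ofReal (|f y| * ‖x - y‖ ^ (-((n:ℝ)-2))) ≤
      ∑ j ∈ Finset.Icc 1 k, ENNReal.ofReal M *
        (ENNReal.ofReal (jap (y - P j) ^ (-s-2)) *
          ENNReal.ofReal (‖x - y‖ ^ (-((n:ℝ)-2)))) := by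
    intro y
    rw [ENNReal.ofReal_mul (abs_nonneg _)]
    calc ENNReal.ofReal |f y| * ENNReal.ofReal (‖x - y‖ ^ (-((n:ℝ)-2)))
        ≤ ENNReal.ofReal (M * ∑ j ∈ Finset.Icc 1 k, jap (y - P j) ^ (-s-2)) *
            ENNReal.ofReal (‖x - y‖ ^ (-((n:ℝ)-2))) :=
          mul_le_mul_left (ENNReal.ofReal_le_ofReal (hfb y)) _
      _ = ∑ j ∈ Finset.Icc 1 k, ENNReal.ofReal M *
            (ENNReal.ofReal (jap (y - P j) ^ (-s-2)) *
              ENNReal.ofReal (‖x - y‖ ^ (-((n:ℝ)-2)))) := by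
          rw [ENNReal.ofReal_mul hM, ENNReal.ofReal_sum_of_nonneg (fun j _ => hterm _ _),
            Finset.mul_sum, Finset.sum_mul]
          exact Finset.sum_congr rfl fun j _ => by ring
  have hj : ∀ j, ∫⁻ y, ENNReal.ofReal (jap (y - P j) ^ (-s-2)) *
      ENNReal.ofReal (‖x - y‖ ^ (-((n:ℝ)-2))) ≤
      c * ENNReal.ofReal (jap (x - P j) ^ (-s)) := by
    intro j
    have heq : ∀ y : EuclideanSpace ℝ (Fin n),
        ENNReal.ofReal (jap (y - P j) ^ (-s-2)) *
          ENNReal.ofReal (‖x - y‖ ^ (-((n:ℝ)-2))) =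
        ENNReal.ofReal (jap (y + -(P j)) ^ (-s-2)) *
          ENNReal.ofReal (‖(x - P j) - (y + -(P j))‖ ^ (-((n:ℝ)-2))) := by
      intro y
      rw [← sub_eq_add_neg, show x - y = x - P j - (y - P j) from by abel]
    calc ∫⁻ y, ENNReal.ofReal (jap (y - P j) ^ (-s-2)) *
          ENNReal.ofReal (‖x - y‖ ^ (-((n:ℝ)-2)))
        = ∫⁻ y, ENNReal.ofReal (jap (y + -(P j)) ^ (-s-2)) *
            ENNReal.ofReal (‖(x - P j) - (y + -(P j))‖ ^ (-((n:ℝ)-2))) :=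
          lintegral_congr heq
      _ = ∫⁻ z, ENNReal.ofReal (jap z ^ (-s-2)) *
            ENNReal.ofReal (‖(x - P j) - z‖ ^ (-((n:ℝ)-2))) :=
          lintegral_add_right_eq_self (fun z => ENNReal.ofReal (jap z ^ (-s-2)) *
            ENNReal.ofReal (‖(x - P j) - z‖ ^ (-((n:ℝ)-2)))) (-(P j))
      _ ≤ c * ENNReal.ofReal (jap (x - P j) ^ (-s)) := hkey (x - P j)
  calc ∫⁻ y, ENNReal.ofReal (|f y| * ‖x - y‖ ^ (-((n:ℝ)-2)))
      ≤ ∫⁻ y, ∑ j ∈ Finset.Icc 1 k, ENNReal.ofReal M *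
          (ENNReal.ofReal (jap (y - P j) ^ (-s-2)) *
            ENNReal.ofReal (‖x - y‖ ^ (-((n:ℝ)-2)))) := lintegral_mono hptwise
    _ = ∑ j ∈ Finset.Icc 1 k, ∫⁻ y, ENNReal.ofReal M *
          (ENNReal.ofReal (jap (y - P j) ^ (-s-2)) *
            ENNReal.ofReal (‖x - y‖ ^ (-((n:ℝ)-2)))) :=
        lintegral_finset_sum _ (fun j _ => measurable_const.mul
          ((hjapm j).mul (measurable_kernel x ((n:ℝ)-2) hκ0)))
    _ = ENNReal.ofReal M * ∑ j ∈ Finset.Icc 1 k, ∫⁻ y,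
          ENNReal.ofReal (jap (y - P j) ^ (-s-2)) *
            ENNReal.ofReal (‖x - y‖ ^ (-((n:ℝ)-2))) := by
        rw [Finset.mul_sum]
        exact Finset.sum_congr rfl fun j _ =>
          lintegral_const_mul' _ _ ENNReal.ofReal_ne_top
    _ ≤ ENNReal.ofReal M * ∑ j ∈ Finset.Icc 1 k,
          c * ENNReal.ofReal (jap (x - P j) ^ (-s)) :=
        mul_le_mul_right (Finset.sum_le_sum fun j _ => hj j) _
    _ = ENNReal.ofReal M * (c *
          ENNReal.ofReal (∑ j ∈ Finset.Icc 1 k, jap (x - P j) ^ (-s))) := by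
        rw [← Finset.mul_sum, ENNReal.ofReal_sum_of_nonneg (fun j _ => hterm _ _)]
    _ ≤ ENNReal.ofReal M * (ENNReal.ofReal (c.toReal + 1) *
          ENNReal.ofReal (∑ j ∈ Finset.Icc 1 k, jap (x - P j) ^ (-s))) := by
        apply mul_le_mul_right
        apply mul_le_mul_left
        calc c = ENNReal.ofReal c.toReal := (ENNReal.ofReal_toReal hc).symm
          _ ≤ ENNReal.ofReal (c.toReal + 1) := ENNReal.ofReal_le_ofReal (by linarith)
    _ = ENNReal.ofReal ((c.toReal + 1) * M *
          ∑ j ∈ Finset.Icc 1 k, jap (x - P j) ^ (-s)) := by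
        rw [← ENNReal.ofReal_mul (by positivity : (0:ℝ) ≤ c.toReal + 1),
          ← ENNReal.ofReal_mul hM]
        congr 1
        ring
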